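/- Let A be a central supersolvable arrangement in R^d with filtration A = A_d ⊃ ... ⊃ A_1, endowed with a linear order satisfying: if H ∈ A_i \ A_{i-1} and H' ∈ A_j \ A_{j-1} with i < j, then H < H'. Then the set of k-tuples (H_1, ..., H_k) with H_j ∈ A_{i_j} \ A_{i_j - 1} and i_1 < i_2 < ... < i_k is exactly the set of nbc-tuples of size k, i.e., the independent increasing k-tuples containing no broken circuit. -/

import Mathlib

open Module Classical

abbrev Hyp (d : ℕ) := Submodule ℝ (Fin d → ℝ)

noncomputable instance (d : ℕ) : DecidableEq (Hyp d) := Classical.decEq _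

def IsLinHyp (d : ℕ) (H : Hyp d) : Prop := finrank ℝ H = d - 1

noncomputable def arrRank (d : ℕ) (S : Finset (Hyp d)) : ℕ :=
  d - finrank ℝ (S.inf id : Hyp d)

def ArrIndep (d : ℕ) (S : Finset (Hyp d)) : Prop := arrRank d S = S.card

def IsCircuit (d : ℕ) (S : Finset (Hyp d)) : Prop :=
  ¬ ArrIndep d S ∧ ∀ H ∈ S, ArrIndep d (S.erase H)

def IsBrokenCircuit (d : ℕ) (A : Finset (Hyp d)) (ord : Hyp d → ℕ)
    (B : Finset (Hyp d)) : Prop :=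
  ∃ H ∈ A, H ∉ B ∧ IsCircuit d (insert H B) ∧ ∀ H' ∈ B, ord H < ord H'

def IsNBC (d : ℕ) (A : Finset (Hyp d)) (ord : Hyp d → ℕ) (S : Finset (Hyp d)) : Prop :=
  S ⊆ A ∧ ArrIndep d S ∧ ∀ B ⊆ S, ¬ IsBrokenCircuit d A ord B

def arrComplement (d : ℕ) (A : Finset (Hyp d)) : Set (Fin d → ℝ) :=
  {x | ∀ H ∈ A, x ∉ (H : Set (Fin d → ℝ))}

noncomputable def numChambers (d : ℕ) (A : Finset (Hyp d)) : ℕ :=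
  Nat.card (ConnectedComponents (arrComplement d A))

structure SSFiltration (d : ℕ) (A : Finset (Hyp d)) (𝒜 : ℕ → Finset (Hyp d)) : Prop where
  zero : 𝒜 0 = ∅
  top : 𝒜 d = A
  mono : ∀ i < d, 𝒜 i ⊆ 𝒜 (i + 1)
  hyp : ∀ H ∈ A, IsLinHyp d H
  rank : ∀ i, 1 ≤ i → i ≤ d → arrRank d (𝒜 i) = i
  ss : ∀ i, 2 ≤ i → i ≤ d → ∀ H ∈ 𝒜 i, ∀ H' ∈ 𝒜 i, H ≠ H' →
    ∃ H'' ∈ 𝒜 (i - 1), H ⊓ H' ≤ H''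

def CompatOrder (d : ℕ) (𝒜 : ℕ → Finset (Hyp d)) (ord : Hyp d → ℕ) : Prop :=
  ∀ i j : ℕ, ∀ H ∈ 𝒜 i \ 𝒜 (i - 1), ∀ H' ∈ 𝒜 j \ 𝒜 (j - 1), i < j → ord H < ord H'

-- complexification
noncomputable def complexify (d : ℕ) (H : Hyp d) : Submodule ℂ (Fin d → ℂ) :=
  Submodule.span ℂ ((fun x : Fin d → ℝ => (fun i => (x i : ℂ))) '' (H : Set (Fin d → ℝ)))

def cxComplement (d : ℕ) (A : Finset (Hyp d)) : Set (Fin d → ℂ) :=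
  {z | ∀ H ∈ A, z ∉ (complexify d H : Set (Fin d → ℂ))}

namespace StmtAux

variable {d : ℕ}

lemma fr_le (p : Hyp d) : finrank ℝ p ≤ d := by
  simpa [Module.finrank_fin_fun] using p.finrank_le

lemma inf_rank_lower (p q : Hyp d) :
    finrank ℝ p + finrank ℝ q ≤ finrank ℝ (p ⊓ q : Hyp d) + d := by
  have h := Submodule.finrank_sup_add_finrank_inf_eq p q
  have h2 := fr_le (p ⊔ q)
  omega

lemma hyp_ne_rank {p q : Hyp d} (hp : finrank ℝ p = d - 1) (hq : finrank ℝ q = d - 1)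
    (hne : p ≠ q) : finrank ℝ (p ⊓ q : Hyp d) = d - 2 ∧ 2 ≤ d := by
  have hlow := inf_rank_lower p q
  have hlt : finrank ℝ (p ⊓ q : Hyp d) < finrank ℝ p := by
    refine Submodule.finrank_lt_finrank_of_lt (lt_of_le_of_ne inf_le_left ?_)
    intro h
    exact hne (Submodule.eq_of_le_of_finrank_le (inf_eq_left.mp h) (hp ▸ hq.le))
  omega

lemma arrRank_mono {S T : Finset (Hyp d)} (h : S ⊆ T) : arrRank d S ≤ arrRank d T := by
  unfold arrRank
  have := Submodule.finrank_mono (Finset.inf_mono h : T.inf id ≤ S.inf id)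
  omega

lemma arrRank_empty : arrRank d ∅ = 0 := by
  show d - finrank ℝ (⊤ : Hyp d) = 0
  simp [arrRank, Finset.inf_empty, finrank_top, Module.finrank_fin_fun]

lemma indep_singleton {p : Hyp d} (hd : 1 ≤ d) (hp : finrank ℝ p = d - 1) :
    ArrIndep d {p} := by
  unfold ArrIndep arrRank
  rw [Finset.inf_singleton, Finset.card_singleton]
  simp only [id_eq]
  omega

lemma indep_pair {p q : Hyp d} (hp : finrank ℝ p = d - 1) (hq : finrank ℝ q = d - 1)
    (hne : p ≠ q) : ArrIndep d {p, q} := by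
  obtain ⟨hr, hd2⟩ := hyp_ne_rank hp hq hne
  unfold ArrIndep arrRank
  rw [Finset.inf_insert, Finset.inf_singleton,
    Finset.card_insert_of_notMem (by simp [hne]), Finset.card_singleton]
  simp only [id_eq]
  omega

lemma indep_small {S : Finset (Hyp d)} (hd : 1 ≤ d)
    (hS : ∀ p ∈ S, finrank ℝ p = d - 1) (h : S.card ≤ 2) : ArrIndep d S := by
  interval_cases hc : S.card
  · rw [Finset.card_eq_zero.mp hc]
    simp [ArrIndep, arrRank_empty]
  · obtain ⟨a, rfl⟩ := Finset.card_eq_one.mp hc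
    exact indep_singleton hd (hS a (Finset.mem_singleton_self a))
  · obtain ⟨a, b, hne, rfl⟩ := Finset.card_eq_two.mp hc
    exact indep_pair (hS a (by simp)) (hS b (by simp)) hne

lemma arrRank_le_card (S : Finset (Hyp d)) (hS : ∀ p ∈ S, finrank ℝ p = d - 1) :
    arrRank d S ≤ S.card := by
  classical
  induction S using Finset.induction_on with
  | empty => simp [arrRank_empty]
  | @insert a s ha ih =>
    have har : finrank ℝ a = d - 1 := hS a (Finset.mem_insert_self a s)
    have ihs := ih (fun p hp => hS p (Finset.mem_insert_of_mem hp))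
    have hlow := inf_rank_lower a (s.inf id)
    have h2 := fr_le (s.inf id)
    unfold arrRank at ihs ⊢
    rw [Finset.inf_insert, Finset.card_insert_of_notMem ha]
    simp only [id_eq]
    omega

variable {A : Finset (Hyp d)} {𝒜 : ℕ → Finset (Hyp d)}

lemma ssChain (hss : SSFiltration d A 𝒜) :
    ∀ {i j : ℕ}, i ≤ j → j ≤ d → 𝒜 i ⊆ 𝒜 j := by
  intro i j hij hjd
  induction j with
  | zero => rw [Nat.le_zero.mp hij]
  | succ n ih =>
    rcases Nat.lt_or_ge i (n + 1) with h | h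
    · exact (ih (by omega) (by omega)).trans (hss.mono n (by omega))
    · rw [Nat.le_antisymm hij h]

lemma ssHyp (hss : SSFiltration d A 𝒜) {i : ℕ} (hi : i ≤ d) {p : Hyp d}
    (hp : p ∈ 𝒜 i) : finrank ℝ p = d - 1 :=
  hss.hyp p (hss.top ▸ ssChain hss hi le_rfl hp)

lemma keyLemma (hss : SSFiltration d A 𝒜) {i : ℕ} (hi1 : 1 ≤ i) (hid : i ≤ d)
    {b : Hyp d} (hb : b ∈ 𝒜 i) (hb' : b ∉ 𝒜 (i - 1))
    (hle : (𝒜 (i - 1)).inf id ≤ b) : False := by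
  have hbr : finrank ℝ b = d - 1 := ssHyp hss hid hb
  rcases Nat.lt_or_ge i 2 with h2 | h2
  · have hi : i = 1 := by omega
    subst hi
    rw [hss.zero, Finset.inf_empty] at hle
    have : finrank ℝ b = d := by
      rw [top_le_iff.mp hle, finrank_top, Module.finrank_fin_fun]
    omega
  · set Y := (𝒜 (i - 1)).inf id with hYdef
    have hYr : finrank ℝ Y = d - (i - 1) := by
      have h := hss.rank (i - 1) (by omega) (by omega)
      unfold arrRank at h
      rw [← hYdef] at h
      have := fr_le Y
      omega
    have hG : ∃ G ∈ 𝒜 i, ¬ Y ≤ G := by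
      by_contra hA
      push_neg at hA
      have hYle : Y ≤ (𝒜 i).inf id := Finset.le_inf fun G hG => hA G hG
      have hm := Submodule.finrank_mono hYle
      have hr := hss.rank i (by omega) hid
      unfold arrRank at hr
      omega
    obtain ⟨G, hGmem, hGY⟩ := hG
    have hGr : finrank ℝ G = d - 1 := ssHyp hss hid hGmem
    have hbG : b ≠ G := fun h => hGY (h ▸ hle)
    obtain ⟨H'', hH''mem, hH''⟩ := hss.ss i h2 hid b hb G hGmem hbG
    have hH''r : finrank ℝ H'' = d - 1 := ssHyp hss (by omega) hH''mem
    have hYH'' : Y ≤ H'' := Finset.inf_le hH''mem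
    obtain ⟨hbGr, hd2⟩ := hyp_ne_rank hbr hGr hbG
    have hYG_lt : finrank ℝ (Y ⊓ G : Hyp d) < finrank ℝ Y := by
      refine Submodule.finrank_lt_finrank_of_lt (lt_of_le_of_ne inf_le_left ?_)
      intro h
      exact hGY (inf_eq_left.mp h)
    have hYG_low := inf_rank_lower Y G
    have hinf : Y ⊓ (b ⊓ G) = Y ⊓ G := by
      rw [← inf_assoc, inf_eq_left.mpr hle]
    have hsup := Submodule.finrank_sup_add_finrank_inf_eq Y (b ⊓ G)
    rw [hinf] at hsup
    have hZH : Y ⊔ b ⊓ G ≤ H'' := sup_le hYH'' hH''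
    have hZb : Y ⊔ b ⊓ G ≤ b := sup_le hle inf_le_left
    have h1 : (Y ⊔ b ⊓ G : Hyp d) = H'' := Submodule.eq_of_le_of_finrank_le hZH (by omega)
    have h2' : (Y ⊔ b ⊓ G : Hyp d) = b := Submodule.eq_of_le_of_finrank_le hZb (by omega)
    rw [h2'] at h1
    rw [← h1] at hH''mem
    exact hb' hH''mem

noncomputable def lvl (𝒜 : ℕ → Finset (Hyp d)) (p : Hyp d) : ℕ := sInf {i | p ∈ 𝒜 i}

lemma lvl_spec (hss : SSFiltration d A 𝒜) {p : Hyp d} (hp : p ∈ A) :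
    1 ≤ lvl 𝒜 p ∧ lvl 𝒜 p ≤ d ∧ p ∈ 𝒜 (lvl 𝒜 p) ∧ p ∉ 𝒜 (lvl 𝒜 p - 1) := by
  have hne : p ∈ 𝒜 d := hss.top ▸ hp
  have hmem : lvl 𝒜 p ∈ {i | p ∈ 𝒜 i} := Nat.sInf_mem ⟨d, hne⟩
  have hle : lvl 𝒜 p ≤ d := Nat.sInf_le hne
  have h1 : 1 ≤ lvl 𝒜 p := by
    by_contra h
    have h0 : lvl 𝒜 p = 0 := by omega
    rw [h0] at hmem
    rw [Set.mem_setOf_eq, hss.zero] at hmem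
    exact absurd hmem (Finset.notMem_empty p)
  refine ⟨h1, hle, hmem, ?_⟩
  intro hcon
  have h2 : lvl 𝒜 p ≤ lvl 𝒜 p - 1 := Nat.sInf_le hcon
  omega

lemma lvl_unique (hss : SSFiltration d A 𝒜) {p : Hyp d} {i : ℕ} (hi1 : 1 ≤ i) (hid : i ≤ d)
    (h1 : p ∈ 𝒜 i) (h2 : p ∉ 𝒜 (i - 1)) : lvl 𝒜 p = i := by
  have hp : p ∈ A := hss.top ▸ ssChain hss hid le_rfl h1
  obtain ⟨l1, ld, lm, ln⟩ := lvl_spec hss hp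
  rcases lt_trichotomy (lvl 𝒜 p) i with h | h | h
  · exact absurd (ssChain hss (show lvl 𝒜 p ≤ i - 1 by omega) (by omega) lm) h2
  · exact h
  · exact absurd (ssChain hss (show i ≤ lvl 𝒜 p - 1 by omega) (by omega) h1) ln

lemma indep_of_distinct_levels (hss : SSFiltration d A 𝒜) :
    ∀ (n : ℕ) (S : Finset (Hyp d)), S.card = n → (∀ p ∈ S, p ∈ A) →
      Set.InjOn (lvl 𝒜) ↑S → ArrIndep d S := by
  intro n
  induction n with
  | zero =>
    intro S hc _ _
    rw [Finset.card_eq_zero.mp hc]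
    simp [ArrIndep, arrRank_empty]
  | succ n ih =>
    intro S hc hmem hinj
    obtain ⟨b, hbS, hbmax⟩ := S.exists_max_image (lvl 𝒜) (Finset.card_pos.mp (by omega))
    obtain ⟨hi1, hid, hbi, hbi'⟩ := lvl_spec hss (hmem b hbS)
    set S' := S.erase b with hS'def
    have hS'card : S'.card = n := by
      rw [hS'def, Finset.card_erase_of_mem hbS, hc]
      omega
    have hS'A : ∀ p ∈ S', p ∈ A := fun p hp => hmem p (Finset.mem_of_mem_erase hp)
    have hS'inj : Set.InjOn (lvl 𝒜) ↑S' := hinj.mono (by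
      intro x hx; exact Finset.mem_coe.mpr (Finset.mem_of_mem_erase (Finset.mem_coe.mp hx)))
    have hind := ih S' hS'card hS'A hS'inj
    have hsub : S' ⊆ 𝒜 (lvl 𝒜 b - 1) := by
      intro p hp
      have hpS := Finset.mem_of_mem_erase hp
      obtain ⟨l1, ld, lm, _⟩ := lvl_spec hss (hmem p hpS)
      have hlt : lvl 𝒜 p < lvl 𝒜 b := by
        refine lt_of_le_of_ne (hbmax p hpS) ?_
        intro h
        exact Finset.ne_of_mem_erase hp (hinj (Finset.mem_coe.mpr hpS) (Finset.mem_coe.mpr hbS) h)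
      exact ssChain hss (by omega) (by omega) lm
    have hnle : ¬ S'.inf id ≤ b := by
      intro hcon
      exact keyLemma hss hi1 hid hbi hbi' ((Finset.inf_mono hsub).trans hcon)
    have hSeq : S = insert b S' := (Finset.insert_erase hbS).symm
    have hbr : finrank ℝ b = d - 1 := hss.hyp b (hmem b hbS)
    have hlow := inf_rank_lower b (S'.inf id)
    have hlt : finrank ℝ (b ⊓ S'.inf id : Hyp d) < finrank ℝ (S'.inf id : Hyp d) := by
      refine Submodule.finrank_lt_finrank_of_lt (lt_of_le_of_ne inf_le_right ?_)
      intro h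
      exact hnle (inf_eq_right.mp h)
    unfold ArrIndep arrRank at hind ⊢
    rw [hS'card] at hind
    have hfle := fr_le (S'.inf id)
    rw [hSeq, Finset.inf_insert, Finset.card_insert_of_notMem (Finset.notMem_erase b S)]
    simp only [id_eq]
    rw [hS'card]
    omega


lemma no_bc (hss : SSFiltration d A 𝒜) {ord : Hyp d → ℕ} (hcomp : CompatOrder d 𝒜 ord)
    {S B : Finset (Hyp d)} (hSA : ∀ p ∈ S, p ∈ A) (hSinj : Set.InjOn (lvl 𝒜) ↑S)
    (hBS : B ⊆ S) : ¬ IsBrokenCircuit d A ord B := by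
  rintro ⟨H₀, hH₀A, hH₀B, ⟨hCdep, hCind⟩, hord⟩
  have hd1 : 1 ≤ d := by
    by_contra hd
    have hd0 : d = 0 := by omega
    have hAe : A = ∅ := by
      have h : 𝒜 d ⊆ 𝒜 0 := ssChain hss (by omega) (by omega)
      rw [hss.top, hss.zero] at h
      exact Finset.subset_empty.mp h
    rw [hAe] at hH₀A
    exact absurd hH₀A (Finset.notMem_empty _)
  have hB2 : 2 ≤ B.card := by
    by_contra h
    have : B.card = 0 ∨ B.card = 1 := by omega
    rcases this with h0 | h1
    · rw [Finset.card_eq_zero.mp h0] at hCdep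
      exact hCdep (indep_singleton hd1 (hss.hyp _ hH₀A))
    · obtain ⟨b, hb⟩ := Finset.card_eq_one.mp h1
      rw [hb] at hCdep hH₀B
      have hne : H₀ ≠ b := by
        intro he; exact hH₀B (he ▸ Finset.mem_singleton_self b)
      exact hCdep (indep_pair (hss.hyp _ hH₀A)
        (hss.hyp _ (hSA b (hBS (hb ▸ Finset.mem_singleton_self b)))) hne)
  obtain ⟨bmax, hbB, hbmax⟩ := B.exists_max_image (lvl 𝒜) (Finset.card_pos.mp (by omega))
  have hbS := hBS hbB
  obtain ⟨hi1, hid, hbi, hbi'⟩ := lvl_spec hss (hSA _ hbS)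
  obtain ⟨b', hb'B, hb'ne⟩ : ∃ b' ∈ B, b' ≠ bmax := by
    obtain ⟨b', hb'⟩ := Finset.card_pos.mp
      (show 0 < (B.erase bmax).card by rw [Finset.card_erase_of_mem hbB]; omega)
    exact ⟨b', Finset.mem_of_mem_erase hb', Finset.ne_of_mem_erase hb'⟩
  have hb'lt : lvl 𝒜 b' < lvl 𝒜 bmax := by
    refine lt_of_le_of_ne (hbmax _ hb'B) ?_
    intro h
    exact hb'ne (hSinj (Finset.mem_coe.mpr (hBS hb'B)) (Finset.mem_coe.mpr hbS) h)
  obtain ⟨j1, jd, jm, jn⟩ := lvl_spec hss (hSA _ (hBS hb'B))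
  obtain ⟨l1, ld, lm, ln⟩ := lvl_spec hss hH₀A
  have hH₀lvl : lvl 𝒜 H₀ ≤ lvl 𝒜 b' := by
    by_contra h
    push_neg at h
    have := hcomp (lvl 𝒜 b') (lvl 𝒜 H₀) b' (Finset.mem_sdiff.mpr ⟨jm, jn⟩) H₀
      (Finset.mem_sdiff.mpr ⟨lm, ln⟩) h
    have := hord b' hb'B
    omega
  have hbC : bmax ∈ insert H₀ B := Finset.mem_insert_of_mem hbB
  have hTsub : (insert H₀ B).erase bmax ⊆ 𝒜 (lvl 𝒜 bmax - 1) := by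
    intro p hp
    have hpC := Finset.mem_of_mem_erase hp
    have hpne := Finset.ne_of_mem_erase hp
    rcases Finset.mem_insert.mp hpC with h | h
    · subst h
      exact ssChain hss (by omega) (by omega) lm
    · obtain ⟨p1, pd, pm, pn⟩ := lvl_spec hss (hSA _ (hBS h))
      have hplt : lvl 𝒜 p < lvl 𝒜 bmax := by
        refine lt_of_le_of_ne (hbmax _ h) ?_
        intro he
        exact hpne (hSinj (Finset.mem_coe.mpr (hBS h)) (Finset.mem_coe.mpr hbS) he)
      exact ssChain hss (by omega) (by omega) pm
  have hTind := hCind bmax hbC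
  have hCcard : (insert H₀ B).card = B.card + 1 := Finset.card_insert_of_notMem hH₀B
  have hTcard : ((insert H₀ B).erase bmax).card = B.card := by
    rw [Finset.card_erase_of_mem hbC, hCcard]
    omega
  have hCA : ∀ p ∈ insert H₀ B, p ∈ A := by
    intro p hp
    rcases Finset.mem_insert.mp hp with h | h
    · exact h ▸ hH₀A
    · exact hSA p (hBS h)
  have hCle := arrRank_le_card (insert H₀ B) (fun p hp => hss.hyp p (hCA p hp))
  have hCmono := arrRank_mono (Finset.erase_subset bmax (insert H₀ B))
  have hCne : arrRank d (insert H₀ B) ≠ (insert H₀ B).card := hCdep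
  have hfC := fr_le ((insert H₀ B).inf id)
  have hfT := fr_le (((insert H₀ B).erase bmax).inf id)
  unfold ArrIndep arrRank at hTind hCle hCmono hCne
  have hfeq : finrank ℝ (((insert H₀ B).erase bmax).inf id : Hyp d)
      ≤ finrank ℝ ((insert H₀ B).inf id : Hyp d) := by omega
  have hinfle : (insert H₀ B).inf id ≤ ((insert H₀ B).erase bmax).inf id :=
    Finset.inf_mono (Finset.erase_subset _ _)
  have heq : (insert H₀ B).inf id = ((insert H₀ B).erase bmax).inf id :=
    Submodule.eq_of_le_of_finrank_le hinfle hfeq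
  have hfin : ((insert H₀ B).erase bmax).inf id ≤ bmax := heq ▸ Finset.inf_le hbC
  exact keyLemma hss hi1 hid hbi hbi' ((Finset.inf_mono hTsub).trans hfin)

end StmtAux

open StmtAux in
/-- In a supersolvable arrangement with compatible order, the nbc-tuples
of size k are exactly the tuples choosing hyperplanes from strictly increasing
filtration levels. -/
theorem stmt2 (d k : ℕ) (A : Finset (Hyp d)) (𝒜 : ℕ → Finset (Hyp d)) (ord : Hyp d → ℕ)
    (hss : SSFiltration d A 𝒜)
    (hordinj : Set.InjOn ord (A : Set (Hyp d)))
    (hcomp : CompatOrder d 𝒜 ord)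
    (H : Fin k → Hyp d) (hmem : ∀ t, H t ∈ A) :
    (∃ lev : Fin k → ℕ, StrictMono lev ∧
        ∀ t, 1 ≤ lev t ∧ lev t ≤ d ∧ H t ∈ 𝒜 (lev t) ∧ H t ∉ 𝒜 (lev t - 1)) ↔
    (StrictMono (fun t => ord (H t)) ∧ IsNBC d A ord (Finset.image H Finset.univ) ∧
      (Finset.image H Finset.univ).card = k) := by
  constructor
  · rintro ⟨lev, hlevmono, hlev⟩
    have hlvl : ∀ t, lvl 𝒜 (H t) = lev t := fun t =>
      lvl_unique hss (hlev t).1 (hlev t).2.1 (hlev t).2.2.1 (hlev t).2.2.2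
    have hHinj : Function.Injective H := fun t t' h =>
      hlevmono.injective (by rw [← hlvl, ← hlvl, h])
    have hSA : ∀ p ∈ Finset.image H Finset.univ, p ∈ A := by
      intro p hp
      obtain ⟨t, _, rfl⟩ := Finset.mem_image.mp hp
      exact hmem t
    have hSinj : Set.InjOn (lvl 𝒜) ↑(Finset.image H Finset.univ) := by
      intro p hp q hq hpq
      obtain ⟨t, _, rfl⟩ := Finset.mem_image.mp (Finset.mem_coe.mp hp)
      obtain ⟨t', _, rfl⟩ := Finset.mem_image.mp (Finset.mem_coe.mp hq)
      rw [hlvl, hlvl] at hpq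
      exact congrArg H (hlevmono.injective hpq)
    refine ⟨?_, ⟨fun p hp => hSA p hp, ?_, ?_⟩, ?_⟩
    · intro t t' h
      exact hcomp (lev t) (lev t') (H t)
        (Finset.mem_sdiff.mpr ⟨(hlev t).2.2.1, (hlev t).2.2.2⟩) (H t')
        (Finset.mem_sdiff.mpr ⟨(hlev t').2.2.1, (hlev t').2.2.2⟩) (hlevmono h)
    · exact indep_of_distinct_levels hss _ _ rfl hSA hSinj
    · intro B hB
      exact no_bc hss hcomp hSA hSinj hB
    · rw [Finset.card_image_of_injective _ hHinj, Finset.card_univ, Fintype.card_fin]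
  · rintro ⟨hmono, ⟨hsub, hindep, hnbc⟩, hcard⟩
    refine ⟨fun t => lvl 𝒜 (H t), ?_, fun t => lvl_spec hss (hmem t)⟩
    intro t t' htt
    have hordlt : ord (H t) < ord (H t') := hmono htt
    obtain ⟨a1, ad, am, an⟩ := lvl_spec hss (hmem t)
    obtain ⟨b1, bd, bm, bn⟩ := lvl_spec hss (hmem t')
    rcases lt_trichotomy (lvl 𝒜 (H t)) (lvl 𝒜 (H t')) with h | h | h
    · exact h
    · exfalso
      have hne : H t ≠ H t' := fun he => absurd (he ▸ hordlt) (lt_irrefl _)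
      rw [h] at am an
      have hi2 : 2 ≤ lvl 𝒜 (H t') := by
        by_contra h2
        have hi : lvl 𝒜 (H t') = 1 := by omega
        have hpair := indep_pair (hss.hyp _ (hmem t)) (hss.hyp _ (hmem t')) hne
        have hsub1 : ({H t, H t'} : Finset (Hyp d)) ⊆ 𝒜 1 := by
          intro p hp
          rcases Finset.mem_insert.mp hp with rfl | hp'
          · exact hi ▸ am
          · rw [Finset.mem_singleton.mp hp']
            exact hi ▸ bm
        have hmono' := arrRank_mono hsub1
        have hr := hss.rank 1 le_rfl (by omega)
        have hc2 : ({H t, H t'} : Finset (Hyp d)).card = 2 := by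
          rw [Finset.card_insert_of_notMem (by simp [hne]), Finset.card_singleton]
        unfold ArrIndep at hpair
        omega
      obtain ⟨H'', hH''m, hH''le⟩ := hss.ss _ hi2 bd (H t) am (H t') bm hne
      have hH''A : H'' ∈ A := hss.top ▸ ssChain hss (show lvl 𝒜 (H t') - 1 ≤ d by omega) le_rfl hH''m
      have hH''r : finrank ℝ H'' = d - 1 := hss.hyp _ hH''A
      obtain ⟨c1, cd, cm, cn⟩ := lvl_spec hss hH''A
      have hclt : lvl 𝒜 H'' < lvl 𝒜 (H t') := by
        by_contra hcl
        push_neg at hcl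
        exact cn (ssChain hss (by omega) (by omega) hH''m)
      have hne1 : H'' ≠ H t := fun he => an (he ▸ hH''m)
      have hne2 : H'' ≠ H t' := fun he => bn (he ▸ hH''m)
      have hord1 : ord H'' < ord (H t) :=
        hcomp _ _ H'' (Finset.mem_sdiff.mpr ⟨cm, cn⟩) (H t) (Finset.mem_sdiff.mpr ⟨am, an⟩) hclt
      have hord2 : ord H'' < ord (H t') :=
        hcomp _ _ H'' (Finset.mem_sdiff.mpr ⟨cm, cn⟩) (H t') (Finset.mem_sdiff.mpr ⟨bm, bn⟩) hclt
      obtain ⟨hr2, hd2⟩ := hyp_ne_rank (hss.hyp _ (hmem t)) (hss.hyp _ (hmem t')) hne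
      have hc3 : ({H'', H t, H t'} : Finset (Hyp d)).card = 3 := by
        rw [Finset.card_insert_of_notMem (by simp [hne1, hne2]),
          Finset.card_insert_of_notMem (by simp [hne]), Finset.card_singleton]
      have hallhyp : ∀ q ∈ ({H'', H t, H t'} : Finset (Hyp d)), finrank ℝ q = d - 1 := by
        intro q hq
        rcases Finset.mem_insert.mp hq with rfl | hq'
        · exact hH''r
        rcases Finset.mem_insert.mp hq' with rfl | hq''
        · exact hss.hyp _ (hmem t)
        · rw [Finset.mem_singleton.mp hq'']
          exact hss.hyp _ (hmem t')
      refine hnbc {H t, H t'} ?_ ⟨H'', hH''A, ?_, ⟨?_, ?_⟩, ?_⟩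
      · intro p hp
        rcases Finset.mem_insert.mp hp with rfl | hp'
        · exact Finset.mem_image.mpr ⟨t, Finset.mem_univ t, rfl⟩
        · rw [Finset.mem_singleton.mp hp']
          exact Finset.mem_image.mpr ⟨t', Finset.mem_univ t', rfl⟩
      · intro hc
        rcases Finset.mem_insert.mp hc with he | hp'
        · exact hne1 he
        · exact hne2 (Finset.mem_singleton.mp hp')
      · intro hcon
        unfold ArrIndep arrRank at hcon
        have hinf : ({H'', H t, H t'} : Finset (Hyp d)).inf id = (H t) ⊓ (H t') := by
          rw [Finset.inf_insert, Finset.inf_insert, Finset.inf_singleton]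
          simp only [id_eq]
          exact inf_eq_right.mpr hH''le
        rw [hinf, hc3] at hcon
        omega
      · intro p hp
        refine indep_small (by omega) ?_ ?_
        · intro q hq
          exact hallhyp q (Finset.mem_of_mem_erase hq)
        · rw [Finset.card_erase_of_mem hp, hc3]
      · intro p hp
        rcases Finset.mem_insert.mp hp with rfl | hp'
        · exact hord1
        · rw [Finset.mem_singleton.mp hp']
          exact hord2
    · exfalso
      have := hcomp _ _ (H t') (Finset.mem_sdiff.mpr ⟨bm, bn⟩) (H t)
        (Finset.mem_sdiff.mpr ⟨am, an⟩) h
      omega
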